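/- Zero exploitability characterizes Nash equilibrium strategies: in a finite two-player zero-sum game, a mixed strategy p of player 1 satisfies sInf {u(p, q) | q a mixed strategy of player 2} = sSup {sInf {u(p', q) | q a mixed strategy of player 2} | p' a mixed strategy of player 1} if and only if there exists a mixed strategy q of player 2 such that (p, q) is a Nash equilibrium. -/

import Mathlib

/-- A mixed strategy over a finite action set. -/
def IsMixed {I : Type*} [Fintype I] (p : I → ℝ) : Prop :=
  (∀ i, 0 ≤ p i) ∧ ∑ i, p i = 1

/-- Expected payoff to player 1 in the two-player zero-sum game with payoff matrix `A`. -/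
def u {I J : Type*} [Fintype I] [Fintype J] (A : I → J → ℝ)
    (p : I → ℝ) (q : J → ℝ) : ℝ :=
  ∑ i, ∑ j, p i * A i j * q j

/-- A Nash equilibrium in mixed strategies. -/
def IsNash {I J : Type*} [Fintype I] [Fintype J] (A : I → J → ℝ)
    (p : I → ℝ) (q : J → ℝ) : Prop :=
  IsMixed p ∧ IsMixed q ∧
    (∀ p' : I → ℝ, IsMixed p' → u A p' q ≤ u A p q) ∧
    (∀ q' : J → ℝ, IsMixed q' → u A p q ≤ u A p q')

/-!
If `(p, q)` is an equilibrium, the security level of `p` is `u(p, q)`, while any `p'` guarantees at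
most `u(p', q) ≤ u(p, q)`; so `p` attains the maximin value. Conversely, the minimax theorem gives
an equilibrium `(p₀, q₀)`, and if `p` guarantees its value `u(p₀, q₀)` then `u(p, q₀)` equals that
value, which makes `p` and `q₀` mutual best replies.

For the minimax theorem let `q₀` minimise `v(q) = maxᵢ (A q)ᵢ` over the simplex. The convex set
`{A q}` misses the open orthant `{y | ∀ i, yᵢ < v(q₀)}`; the normal of a separating hyperplane is
nonnegative, since the functional is bounded above on the orthant, and normalised it is a strategy
`p₀` guaranteeing `v(q₀)`, the most that `q₀` concedes.
-/

open Matrix Set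

section MatrixGame

variable {I J : Type*} [Fintype I] [Fintype J]

theorem IsMixed.dotProduct_le {p y : I → ℝ} {M : ℝ} (hp : IsMixed p) (hy : ∀ i, y i ≤ M) :
    p ⬝ᵥ y ≤ M :=
  calc p ⬝ᵥ y ≤ ∑ i, p i * M :=
        Finset.sum_le_sum fun i _ => mul_le_mul_of_nonneg_left (hy i) (hp.1 i)
    _ = M := by rw [← Finset.sum_mul, hp.2, one_mul]

theorem isMixed_inv_sum_smul {w : I → ℝ} (hw : 0 ≤ w) (hsum : 0 < ∑ i, w i) :
    IsMixed ((∑ i, w i)⁻¹ • w) :=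
  ⟨fun i => mul_nonneg (inv_nonneg.2 hsum.le) (hw i), by
    simp only [Pi.smul_apply, smul_eq_mul, ← Finset.mul_sum, inv_mul_cancel₀ hsum.ne']⟩

theorem u_eq_dotProduct_mulVec (A : I → J → ℝ) (p : I → ℝ) (q : J → ℝ) :
    u A p q = p ⬝ᵥ (of A *ᵥ q) := by
  simp only [u, dotProduct, mulVec, of_apply, Finset.mul_sum, mul_assoc]

theorem nonneg_of_forall_le_dotProduct_le {w x : I → ℝ} {c : ℝ}
    (h : ∀ y ≤ x, w ⬝ᵥ y ≤ c) : 0 ≤ w := by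
  classical
  intro i
  by_contra! hwi
  obtain ⟨n, hn⟩ := exists_nat_gt ((c - w ⬝ᵥ x) / -w i)
  have := h (x - (n : ℝ) • Pi.single i 1)
    (sub_le_self _ (smul_nonneg n.cast_nonneg (Pi.single_nonneg.2 zero_le_one)))
  rw [dotProduct_sub, dotProduct_smul, dotProduct_single, smul_eq_mul] at this
  rw [div_lt_iff₀ (neg_pos.2 hwi)] at hn
  linarith

theorem exists_isMixed_forall_le_dotProduct {S : Set (I → ℝ)} (hS : Convex ℝ S)
    (hne : S.Nonempty) {v : ℝ} (hv : ∀ y ∈ S, ∃ i, v ≤ y i) :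
    ∃ p, IsMixed p ∧ ∀ y ∈ S, v ≤ p ⬝ᵥ y := by
  classical
  set O : Set (I → ℝ) := univ.pi fun _ => Iio v
  have hOS : Disjoint O S := Set.disjoint_left.2 fun y hyO hyS => by
    obtain ⟨i, hi⟩ := hv y hyS
    exact (hyO i (mem_univ i)).not_ge hi
  obtain ⟨f, c, hfO, hfS⟩ := geometric_hahn_banach_open (convex_pi fun _ _ => convex_Iio v)
    (isOpen_set_pi finite_univ fun _ _ => isOpen_Iio) hS hOS
  set w : I → ℝ := fun i => f fun j => if i = j then 1 else 0
  have hf : ∀ y, f y = w ⬝ᵥ y := fun y => by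
    rw [← f.coe_coe, LinearMap.pi_apply_eq_sum_univ, dotProduct]
    simp only [smul_eq_mul, mul_comm, w, ContinuousLinearMap.coe_coe]
  have hfc : ∀ y ≤ Function.const I v, w ⬝ᵥ y ≤ c := by
    have : closure O ⊆ {y | f y ≤ c} :=
      (isClosed_le f.continuous continuous_const).closure_subset_iff.2 fun y hy => (hfO y hy).le
    rw [closure_pi_set, closure_Iio, pi_univ_Iic] at this
    exact fun y hy => hf y ▸ this hy
  have hw : 0 ≤ w := nonneg_of_forall_le_dotProduct_le hfc
  have hsum : 0 < ∑ i, w i := by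
    refine Fintype.sum_pos (hw.lt_of_ne fun hw0 => ?_)
    obtain ⟨y, hy⟩ := hne
    have hO : f (Function.const I (v - 1)) < c := hfO _ fun i _ => by simp
    have hS := hfS y hy
    simp only [hf, ← hw0, zero_dotProduct] at hO hS
    linarith
  refine ⟨(∑ i, w i)⁻¹ • w, isMixed_inv_sum_smul hw hsum, fun y hy => ?_⟩
  rw [smul_dotProduct, smul_eq_mul, le_inv_mul_iff₀ hsum]
  calc (∑ i, w i) * v = w ⬝ᵥ Function.const I v := by simp [dotProduct, Finset.sum_mul]
    _ ≤ c := hfc _ le_rfl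
    _ ≤ w ⬝ᵥ y := hf y ▸ hfS y hy

theorem exists_isNash [Nonempty I] [Nonempty J] (A : I → J → ℝ) : ∃ p q, IsNash A p q := by
  classical
  set g : (J → ℝ) → ℝ := fun q => Finset.univ.sup' Finset.univ_nonempty (of A *ᵥ q)
  have hg : Continuous g := Continuous.finset_sup'_apply _ fun i _ => by fun_prop
  obtain ⟨q₀, hq₀, hmin⟩ := (isCompact_stdSimplex ℝ J).exists_isMinOn
    ⟨_, ite_eq_mem_stdSimplex ℝ (Classical.arbitrary J)⟩ hg.continuousOn
  have hv : ∀ y ∈ (of A *ᵥ ·) '' stdSimplex ℝ J, ∃ i, g q₀ ≤ y i := by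
    rintro _ ⟨q, hq, rfl⟩
    obtain ⟨i, -, hi⟩ := Finset.exists_mem_eq_sup' Finset.univ_nonempty (of A *ᵥ q)
    exact ⟨i, (hmin hq).trans_eq hi⟩
  obtain ⟨p₀, hp₀, hsep⟩ := exists_isMixed_forall_le_dotProduct
    ((convex_stdSimplex ℝ J).linear_image (mulVecLin (of A)))
    ⟨_, _, ite_eq_mem_stdSimplex ℝ (Classical.arbitrary J), rfl⟩ hv
  have hupper : ∀ p, IsMixed p → u A p q₀ ≤ g q₀ := fun p hp => by
    rw [u_eq_dotProduct_mulVec]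
    exact hp.dotProduct_le fun i => Finset.le_sup' _ (Finset.mem_univ i)
  have hlower : ∀ q, IsMixed q → g q₀ ≤ u A p₀ q := fun q hq => by
    rw [u_eq_dotProduct_mulVec]
    exact hsep _ ⟨q, hq, rfl⟩
  have hval : u A p₀ q₀ = g q₀ := (hupper p₀ hp₀).antisymm (hlower q₀ hq₀)
  exact ⟨p₀, q₀, hp₀, hq₀, fun p hp => hval ▸ hupper p hp, fun q hq => hval ▸ hlower q hq⟩

noncomputable def securityLevel (A : I → J → ℝ) (p : I → ℝ) : ℝ :=
  sInf {x | ∃ q, IsMixed q ∧ u A p q = x}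

noncomputable def maximinValue (A : I → J → ℝ) : ℝ :=
  sSup {x | ∃ p, IsMixed p ∧ securityLevel A p = x}

theorem securityLevel_le (A : I → J → ℝ) (p : I → ℝ) {q : J → ℝ} (hq : IsMixed q) :
    securityLevel A p ≤ u A p q :=
  csInf_le ((isCompact_stdSimplex ℝ J).image (f := u A p) (by unfold u; fun_prop)).bddBelow
    ⟨q, hq, rfl⟩

variable {A : I → J → ℝ} {p p₀ : I → ℝ} {q q₀ : J → ℝ}

theorem IsNash.securityLevel_eq (h : IsNash A p q) : securityLevel A p = u A p q :=
  (securityLevel_le A p h.2.1).antisymm <| le_csInf ⟨_, q, h.2.1, rfl⟩ <| by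
    rintro _ ⟨q', hq', rfl⟩
    exact h.2.2.2 q' hq'

theorem IsNash.maximinValue_eq (h : IsNash A p q) : maximinValue A = u A p q := by
  refine IsGreatest.csSup_eq ⟨⟨p, h.1, h.securityLevel_eq⟩, ?_⟩
  rintro _ ⟨p', hp', rfl⟩
  exact (securityLevel_le A p' h.2.1).trans (h.2.2.1 p' hp')

theorem IsNash.isNash_of_securityLevel_eq (h₀ : IsNash A p₀ q₀) (hp : IsMixed p)
    (h : securityLevel A p = u A p₀ q₀) : IsNash A p q₀ := by
  have hval : u A p q₀ = u A p₀ q₀ :=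
    (h₀.2.2.1 p hp).antisymm (h ▸ securityLevel_le A p h₀.2.1)
  refine ⟨hp, h₀.2.1, fun p' hp' => hval ▸ h₀.2.2.1 p' hp', fun q' hq' => ?_⟩
  rw [hval, ← h]
  exact securityLevel_le A p hq'

end MatrixGame

theorem zero_exploitability_iff_nash {I J : Type*} [Fintype I] [Fintype J]
    [Nonempty I] [Nonempty J] (A : I → J → ℝ)
    (p : I → ℝ) (hp : IsMixed p) :
    sInf {x : ℝ | ∃ q : J → ℝ, IsMixed q ∧ u A p q = x} =
      sSup {x : ℝ | ∃ p' : I → ℝ, IsMixed p' ∧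
        sInf {y : ℝ | ∃ q : J → ℝ, IsMixed q ∧ u A p' q = y} = x} ↔
    ∃ q : J → ℝ, IsNash A p q := by
  change securityLevel A p = maximinValue A ↔ _
  obtain ⟨p₀, q₀, h₀⟩ := exists_isNash A
  constructor
  · intro h
    exact ⟨q₀, h₀.isNash_of_securityLevel_eq hp (h.trans h₀.maximinValue_eq)⟩
  · rintro ⟨q, hq⟩
    rw [hq.securityLevel_eq, hq.maximinValue_eq]
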